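/- arXiv:2309.04123 — 2 statements merged into one kernel-verified Lean document; each statement's English description precedes it below -/
import Mathlib

section
/- Let (𝒜_i)_{i∈I} be subalgebras of a non-commutative probability space (𝒜, φ) that are BMT independent with respect to a digraph G = (I, E). Let {I_j : j ∈ J} be a partition of I into non-empty pairwise disjoint subsets and let ℬ_j be the subalgebra generated by the 𝒜_i with i ∈ I_j. If (i, i') ∉ E whenever i ∈ I_j and i' ∈ I_{j'} with j ≠ j', then the family (ℬ_j)_{j∈J} is boolean independent. -/
open scoped Classical
open Filter

noncomputable section

/-- The relation defining the kernel of `f` restricted to the index set `S`,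
subordinated to the digraph with edge relation `E`: `k ∼ k'` iff `f k = f k'` and
every `l ∈ S` strictly between `k` and `k'` with `f l ≠ f k` satisfies `(f l, f k) ∈ E`. -/
def kerGRelOn {m : ℕ} {V : Type*} (E : V → V → Prop) (f : Fin m → V)
    (S : Finset (Fin m)) (k k' : Fin m) : Prop :=
  f k = f k' ∧ ∀ l ∈ S, min k k' < l → l < max k k' → f l ≠ f k → E (f l) (f k)

/-- The blocks of the kernel of `f|_S` subordinated to the digraph `E`. -/
def kerGBlocks {m : ℕ} {V : Type*} (E : V → V → Prop) (f : Fin m → V)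
    (S : Finset (Fin m)) : Finset (Finset (Fin m)) :=
  S.image fun k => S.filter fun k' => kerGRelOn E f S k k'

/-- The blocks of the plain kernel `ker[f]` of `f : [m] → V`. -/
def kerBlocks {m : ℕ} {V : Type*} (f : Fin m → V) : Finset (Finset (Fin m)) :=
  Finset.univ.image fun k => Finset.univ.filter fun k' => f k = f k'

/-- The product of `a k` for `k ∈ B`, taken in increasing order of `k`. -/
def blockProd {A : Type*} [Monoid A] {m : ℕ} (a : Fin m → A) (B : Finset (Fin m)) : A :=
  ((B.sort (· ≤ ·)).map a).prod

/-- The edge set of the nesting-crossing graph of the partition `π`, relabeled along `f`: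
the pair `(f-label of B, f-label of C)` is an edge whenever `B ≠ C` are blocks of `π` and
some `l ∈ B` lies strictly between two elements (equivalently, between min and max) of `C`. -/
def nestCrossEdges {m : ℕ} {V : Type*} (π : Finset (Finset (Fin m))) (f : Fin m → V) :
    Set (V × V) :=
  { p | ∃ B ∈ π, ∃ C ∈ π, B ≠ C ∧
      (∃ l ∈ B, ∃ c₁ ∈ C, ∃ c₂ ∈ C, c₁ < l ∧ l < c₂) ∧
      (∃ k ∈ B, f k = p.1) ∧ (∃ k' ∈ C, f k' = p.2) }

/-- A family of (non-unital) subalgebras of a non-commutative probability space `(𝒜, φ)`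
is BMT independent with respect to the digraph `E` on the index set `I`. -/
def BMTIndep {𝒜 : Type*} [Ring 𝒜] [Algebra ℂ 𝒜] (φ : 𝒜 →ₗ[ℂ] ℂ)
    {I : Type*} (E : I → I → Prop) (A : I → NonUnitalSubalgebra ℂ 𝒜) : Prop :=
  ∀ (m : ℕ), 1 ≤ m → ∀ (idx : Fin m → I) (a : Fin m → 𝒜),
    (∀ k, a k ∈ A (idx k)) →
    φ (List.ofFn a).prod = ∏ B ∈ kerGBlocks E idx Finset.univ, φ (blockProd a B)

/-- Random variables `a 0, …, a (N-1)` are BMT independent with respect to the digraph `E`. -/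
def BMTIndepVars {𝒜 : Type*} [Ring 𝒜] [Algebra ℂ 𝒜] (φ : 𝒜 →ₗ[ℂ] ℂ)
    {N : ℕ} (E : Fin N → Fin N → Prop) (a : Fin N → 𝒜) : Prop :=
  ∀ (m : ℕ) (idx : Fin m → Fin N),
    φ (List.ofFn fun k => a (idx k)).prod
      = ∏ B ∈ kerGBlocks E idx Finset.univ, φ (blockProd (fun k => a (idx k)) B)

/-! By multilinearity it suffices to treat products of letters `a ∈ 𝒜_i`. Let `x` be such a word
with all labels in `I_j` and `y` one whose first label lies in `I_j'`, `j' ≠ j`. By the hypotheses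
on the partition, the first letter of `y` has a label different from, and no edge towards, every
label of `x`; so no class of the kernel subordinated to `G` meets both `x` and `y`, and BMT
independence gives `φ(xy) = φ(x) φ(y)`. Peeling off the first factor of an alternating product
then gives boolean independence by induction. -/

open scoped Pointwise

section Kernel

variable {V : Type*} {E : V → V → Prop}

theorem kerGRelOn_comp_iff {n M : ℕ} (F : Fin M → V) (e : Fin n ↪o Fin M)
    (he : (Set.range e).OrdConnected) (k k' : Fin n) :
    kerGRelOn E (F ∘ e) Finset.univ k k' ↔ kerGRelOn E F Finset.univ (e k) (e k') := by
  simp only [kerGRelOn, Function.comp_apply, Finset.mem_univ, true_implies,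
    ← e.monotone.map_min, ← e.monotone.map_max]
  refine and_congr_right fun _ => ⟨fun h l hl hl' => ?_, fun h t ht ht' => ?_⟩
  · obtain ⟨t, rfl⟩ := he.out (Set.mem_range_self _) (Set.mem_range_self _) ⟨hl.le, hl'.le⟩
    exact h t (e.lt_iff_lt.mp hl) (e.lt_iff_lt.mp hl')
  · exact h (e t) (e.lt_iff_lt.mpr ht) (e.lt_iff_lt.mpr ht')

theorem kerGRelOn_symm {m : ℕ} {f : Fin m → V} {S : Finset (Fin m)} {k k' : Fin m}
    (h : kerGRelOn E f S k k') : kerGRelOn E f S k' k := by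
  obtain ⟨hkk', hbetween⟩ := h
  refine ⟨hkk'.symm, fun l hl hlo hhi hne => ?_⟩
  rw [← hkk']
  exact hbetween l hl (min_comm k k' ▸ hlo) (max_comm k k' ▸ hhi) (hkk' ▸ hne)

theorem kerGRelOn_self {m : ℕ} (f : Fin m → V) (S : Finset (Fin m)) (k : Fin m) :
    kerGRelOn E f S k k :=
  ⟨rfl, fun _ _ hlo hhi _ => absurd (hlo.trans hhi) (by simp)⟩

theorem filter_kerGRelOn_comp {n M : ℕ} (F : Fin M → V) (e : Fin n ↪o Fin M)
    (he : (Set.range e).OrdConnected) (k : Fin n)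
    (hclosed : ∀ l, kerGRelOn E F Finset.univ (e k) l → l ∈ Set.range e) :
    Finset.univ.filter (kerGRelOn E F Finset.univ (e k))
      = (Finset.univ.filter (kerGRelOn E (F ∘ e) Finset.univ k)).map e.toEmbedding := by
  ext l
  simp only [Finset.mem_filter, Finset.mem_univ, true_and, Finset.mem_map,
    RelEmbedding.coe_toEmbedding]
  constructor
  · intro hl
    obtain ⟨t, rfl⟩ := hclosed l hl
    exact ⟨t, (kerGRelOn_comp_iff F e he k t).mpr hl, rfl⟩
  · rintro ⟨t, ht, rfl⟩
    exact (kerGRelOn_comp_iff F e he k t).mp ht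

theorem not_kerGRelOn_append {p q : ℕ} {f : Fin p → V} {g : Fin (q + 1) → V}
    (hsep : ∀ k, f k ≠ g 0 ∧ ¬ E (g 0) (f k)) (k : Fin p) (k' : Fin (q + 1)) :
    ¬ kerGRelOn E (Fin.append f g) Finset.univ (Fin.castAdd (q + 1) k) (Fin.natAdd p k') := by
  rintro ⟨heq, hbetween⟩
  simp only [Fin.append_left, Fin.append_right] at heq
  have hk' : (k' : ℕ) ≠ 0 := fun h => (hsep k).1 (heq.trans (congrArg g (Fin.ext h)))
  have hlt : Fin.castAdd (q + 1) k < Fin.natAdd p k' := by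
    simp only [Fin.lt_def, Fin.val_castAdd, Fin.val_natAdd]; omega
  have hfirst := hbetween (Fin.natAdd p 0) (Finset.mem_univ _)
    (by rw [min_eq_left hlt.le]; simp only [Fin.lt_def, Fin.val_castAdd, Fin.val_natAdd]; omega)
    (by rw [max_eq_right hlt.le]; simp only [Fin.lt_def, Fin.val_natAdd, Fin.val_zero]; omega)
  simp only [Fin.append_left, Fin.append_right] at hfirst
  exact (hsep k).2 (hfirst (hsep k).1.symm)

theorem ordConnected_range_castAddOrderEmb (p q : ℕ) :
    (Set.range (Fin.castAddOrderEmb (n := p) (q + 1))).OrdConnected := by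
  change (Set.range (Fin.castAdd (q + 1) : Fin p → _)).OrdConnected
  rw [Fin.range_castAdd]
  exact Set.ordConnected_Iio

theorem ordConnected_range_natAddOrderEmb (p q : ℕ) :
    (Set.range (Fin.natAddOrderEmb (m := q + 1) p)).OrdConnected := by
  change (Set.range (Fin.natAdd p : Fin (q + 1) → _)).OrdConnected
  rw [Fin.range_natAdd_eq_Ici]
  exact Set.ordConnected_Ici

theorem kerGBlocks_append {p q : ℕ} {f : Fin p → V} {g : Fin (q + 1) → V}
    (hsep : ∀ k, f k ≠ g 0 ∧ ¬ E (g 0) (f k)) :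
    kerGBlocks E (Fin.append f g) Finset.univ
      = (kerGBlocks E f Finset.univ).image (Finset.map (Fin.castAddOrderEmb (q + 1)).toEmbedding)
        ∪ (kerGBlocks E g Finset.univ).image (Finset.map (Fin.natAddOrderEmb p).toEmbedding) := by
  have hleft : Fin.append f g ∘ Fin.castAddOrderEmb (q + 1) = f := funext (Fin.append_left f g)
  have hright : Fin.append f g ∘ Fin.natAddOrderEmb p = g := funext (Fin.append_right f g)
  have hblock_left (k : Fin p) := hleft ▸ filter_kerGRelOn_comp (E := E) (Fin.append f g)
    (Fin.castAddOrderEmb (q + 1)) (ordConnected_range_castAddOrderEmb p q) k (fun l hl => by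
      induction l using Fin.addCases with
      | left l => exact ⟨l, rfl⟩
      | right l => exact absurd hl (not_kerGRelOn_append hsep k l))
  have hblock_right (k : Fin (q + 1)) := hright ▸ filter_kerGRelOn_comp (E := E) (Fin.append f g)
    (Fin.natAddOrderEmb p) (ordConnected_range_natAddOrderEmb p q) k (fun l hl => by
      induction l using Fin.addCases with
      | left l => exact absurd (kerGRelOn_symm hl) (not_kerGRelOn_append hsep l k)
      | right l => exact ⟨l, rfl⟩)
  ext D
  simp only [kerGBlocks, Finset.mem_union, Finset.mem_image, Finset.mem_univ, true_and,
    exists_exists_eq_and]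
  constructor
  · rintro ⟨x, rfl⟩
    induction x using Fin.addCases with
    | left k => exact Or.inl ⟨k, (hblock_left k).symm⟩
    | right k => exact Or.inr ⟨k, (hblock_right k).symm⟩
  · rintro (⟨k, rfl⟩ | ⟨k, rfl⟩)
    · exact ⟨_, hblock_left k⟩
    · exact ⟨_, hblock_right k⟩

theorem nonempty_of_mem_kerGBlocks {m : ℕ} {f : Fin m → V} {S : Finset (Fin m)}
    {C : Finset (Fin m)} (hC : C ∈ kerGBlocks E f S) : C.Nonempty := by
  obtain ⟨k, hk, rfl⟩ := Finset.mem_image.mp hC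
  exact ⟨k, Finset.mem_filter.mpr ⟨hk, kerGRelOn_self f S k⟩⟩

end Kernel

theorem blockProd_map {M : Type*} [Monoid M] {n N : ℕ} (a : Fin N → M) (e : Fin n ↪o Fin N)
    (B : Finset (Fin n)) : blockProd a (B.map e.toEmbedding) = blockProd (a ∘ e) B := by
  rw [blockProd, blockProd, ← Finset.map_sort e.toEmbedding B (· ≤ ·) (· ≤ ·)
    (fun _ _ _ _ => e.le_iff_le.symm), List.map_map]
  rfl

section BMT

variable {𝒜 : Type*} [Ring 𝒜] [Algebra ℂ 𝒜] {φ : 𝒜 →ₗ[ℂ] ℂ} {I : Type*} {E : I → I → Prop}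
  {A : I → NonUnitalSubalgebra ℂ 𝒜}

theorem BMTIndep.map_prod_ofFn_append (hindep : BMTIndep φ E A) {p q : ℕ} (hp : 1 ≤ p)
    {f : Fin p → I} {g : Fin (q + 1) → I} {u : Fin p → 𝒜} {v : Fin (q + 1) → 𝒜}
    (hu : ∀ k, u k ∈ A (f k)) (hv : ∀ k, v k ∈ A (g k))
    (hsep : ∀ k, f k ≠ g 0 ∧ ¬ E (g 0) (f k)) :
    φ (List.ofFn (Fin.append u v)).prod = φ (List.ofFn u).prod * φ (List.ofFn v).prod := by
  have huv (k : Fin (p + (q + 1))) : Fin.append u v k ∈ A (Fin.append f g k) := by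
    induction k using Fin.addCases with
    | left k => simpa using hu k
    | right k => simpa using hv k
  have hdisj : Disjoint
      ((kerGBlocks E f Finset.univ).image (Finset.map (Fin.castAddOrderEmb (q + 1)).toEmbedding))
      ((kerGBlocks E g Finset.univ).image (Finset.map (Fin.natAddOrderEmb p).toEmbedding)) := by
    simp only [Finset.disjoint_left, Finset.mem_image]
    rintro _ ⟨C, hC, rfl⟩ ⟨C', -, hCC'⟩
    obtain ⟨k, hk⟩ := nonempty_of_mem_kerGBlocks hC
    obtain ⟨t, -, ht⟩ := Finset.mem_map.mp (hCC' ▸ Finset.mem_map_of_mem _ hk)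
    have hval : p + (t : ℕ) = k := congrArg Fin.val ht
    omega
  have hleft : Fin.append u v ∘ Fin.castAddOrderEmb (q + 1) = u := funext (Fin.append_left u v)
  have hright : Fin.append u v ∘ Fin.natAddOrderEmb p = v := funext (Fin.append_right u v)
  rw [hindep _ (by omega) _ _ huv, hindep p hp f u hu, hindep (q + 1) (by omega) g v hv,
    kerGBlocks_append hsep, Finset.prod_union hdisj,
    Finset.prod_image fun _ _ _ _ h => Finset.map_injective _ h,
    Finset.prod_image fun _ _ _ _ h => Finset.map_injective _ h]
  simp only [blockProd_map, hleft, hright]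

theorem exists_ofFn_of_mem_closure {M : Type*} [Monoid M] {I : Type*} (s : I → Set M)
    {T : Set I} {z : M} (hz : z ∈ Submonoid.closure (⋃ i ∈ T, s i)) :
    ∃ (n : ℕ) (f : Fin n → I) (u : Fin n → M),
      (∀ k, f k ∈ T ∧ u k ∈ s (f k)) ∧ (List.ofFn u).prod = z := by
  obtain ⟨l, hl, rfl⟩ := Submonoid.exists_list_of_mem_closure hz
  have (k : Fin l.length) : ∃ i ∈ T, l.get k ∈ s i := by
    simpa using hl _ (List.get_mem l k)
  choose f hfT hf using this
  exact ⟨l.length, f, l.get, fun k => ⟨hfT k, hf k⟩, by rw [List.ofFn_get]⟩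

theorem BMTIndep.map_mul_eq_mul_map (hindep : BMTIndep φ E A) {S T : Set I}
    (hST : ∀ i ∈ S, ∀ i' ∈ T, i ≠ i' ∧ ¬ E i' i) {x y : 𝒜}
    (hx : x ∈ (⋃ i ∈ S, (A i : Set 𝒜)) * Submonoid.closure (⋃ i ∈ S, (A i : Set 𝒜)))
    (hy : y ∈ (⋃ i ∈ T, (A i : Set 𝒜)) * Submonoid.closure (⋃ i, (A i : Set 𝒜))) :
    φ (x * y) = φ x * φ y := by
  obtain ⟨a, ha, z, hz, rfl⟩ := hx
  obtain ⟨a', ha', z', hz', rfl⟩ := hy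
  obtain ⟨i, hi, ha⟩ := Set.mem_iUnion₂.mp ha
  obtain ⟨i', hi', ha'⟩ := Set.mem_iUnion₂.mp ha'
  obtain ⟨n, f, u, hu, rfl⟩ := exists_ofFn_of_mem_closure (fun i => (A i : Set 𝒜)) hz
  obtain ⟨n', f', u', hu', rfl⟩ := exists_ofFn_of_mem_closure (T := Set.univ)
    (fun i => (A i : Set 𝒜)) (by simpa using hz')
  have := hindep.map_prod_ofFn_append (p := n + 1) (by omega) (f := Fin.cons i f)
    (g := Fin.cons i' f') (u := Fin.cons a u) (v := Fin.cons a' u')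
    (Fin.cases ha fun k => (hu k).2) (Fin.cases ha' fun k => (hu' k).2)
    (Fin.cases (hST i hi i' hi') fun k => hST _ (hu k).1 i' hi')
  rw [List.ofFn_fin_append, List.prod_append, List.ofFn_cons, List.ofFn_cons] at this
  simpa only [List.prod_cons, mul_assoc] using this

end BMT

theorem map_mul_eq_mul_map_of_mem_span {R A : Type*} [CommSemiring R] [Semiring A] [Algebra R A]
    (φ : A →ₗ[R] R) {s t : Set A} (h : ∀ x ∈ s, ∀ y ∈ t, φ (x * y) = φ x * φ y) {x y : A}
    (hx : x ∈ Submodule.span R s) (hy : y ∈ Submodule.span R t) : φ (x * y) = φ x * φ y := by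
  induction hx using Submodule.span_induction with
  | mem x hx =>
    induction hy using Submodule.span_induction with
    | mem y hy => exact h x hx y hy
    | zero => simp
    | add y y' _ _ ih ih' => simp [mul_add, ih, ih']
    | smul c y _ ih => simp [ih, mul_left_comm]
  | zero => simp
  | add x x' _ _ ih ih' => simp [add_mul, ih, ih']
  | smul c x _ ih => simp [ih, mul_assoc]

theorem Subsemigroup.closure_subset_mul_closure {M : Type*} [Monoid M] (s : Set M) :
    (Subsemigroup.closure s : Set M) ⊆ s * (Submonoid.closure s : Set M) := by
  intro x hx
  induction hx using Subsemigroup.closure_induction with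
  | mem x hx => exact ⟨x, hx, 1, one_mem _, mul_one x⟩
  | mul x y _ _ hx hy =>
    obtain ⟨a, ha, z, hz, rfl⟩ := hx
    obtain ⟨a', ha', z', hz', rfl⟩ := hy
    exact ⟨a, ha, z * (a' * z'), mul_mem hz (mul_mem (Submonoid.subset_closure ha') hz'),
      by simp only [mul_assoc]⟩

theorem NonUnitalAlgebra.mem_span_mul_closure_of_mem_adjoin {R A : Type*} [CommSemiring R]
    [Semiring A] [Algebra R A] {s : Set A} {x : A} (hx : x ∈ NonUnitalAlgebra.adjoin R s) :
    x ∈ Submodule.span R (s * (Submonoid.closure s : Set A)) := by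
  have hx' : x ∈ (NonUnitalAlgebra.adjoin R s).toSubmodule := hx
  rw [NonUnitalAlgebra.adjoin_eq_span] at hx'
  exact Submodule.span_mono (Subsemigroup.closure_subset_mul_closure s) hx'

theorem mul_mem_span_mul_closure {R A : Type*} [CommSemiring R] [Semiring A] [Algebra R A]
    {s t : Set A} (hst : s ⊆ t) {x r : A}
    (hx : x ∈ Submodule.span R (s * (Submonoid.closure s : Set A)))
    (hr : r ∈ Algebra.adjoin R t) :
    x * r ∈ Submodule.span R (s * (Submonoid.closure t : Set A)) := by
  have hr' : r ∈ Submodule.span R (Submonoid.closure t : Set A) := by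
    rw [← Algebra.adjoin_eq_span]; exact hr
  have hxr := Submodule.mul_mem_mul hx hr'
  rw [Submodule.span_mul_span, mul_assoc] at hxr
  refine Submodule.span_mono (Set.mul_subset_mul_left ?_) hxr
  rintro _ ⟨z, hz, z', hz', rfl⟩
  exact mul_mem (Submonoid.closure_mono hst hz) hz'

section Partition

variable {𝒜 : Type*} [Ring 𝒜] [Algebra ℂ 𝒜] {φ : 𝒜 →ₗ[ℂ] ℂ} {I J : Type*} {E : I → I → Prop}
  {A : I → NonUnitalSubalgebra ℂ 𝒜} {P : J → Set I}

theorem BMTIndep.map_mul_eq_mul_map_of_ne (hindep : BMTIndep φ E A)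
    (hdisj : ∀ j j', j ≠ j' → Disjoint (P j) (P j'))
    (hEdge : ∀ j j', j ≠ j' → ∀ i ∈ P j, ∀ i' ∈ P j', ¬ E i i') {j j' : J} (hjj' : j ≠ j')
    {x y : 𝒜} (hx : x ∈ NonUnitalAlgebra.adjoin ℂ (⋃ i ∈ P j, (A i : Set 𝒜)))
    (hy : y ∈ Submodule.span ℂ
      ((⋃ i ∈ P j', (A i : Set 𝒜)) * (Submonoid.closure (⋃ i, (A i : Set 𝒜)) : Set 𝒜))) :
    φ (x * y) = φ x * φ y :=
  map_mul_eq_mul_map_of_mem_span φ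
    (fun _ hx _ hy => hindep.map_mul_eq_mul_map
      (fun i hi i' hi' => ⟨fun h => Set.disjoint_left.mp (hdisj j j' hjj') hi (h ▸ hi'),
        hEdge j' j hjj'.symm i' hi' i hi⟩) hx hy)
    (NonUnitalAlgebra.mem_span_mul_closure_of_mem_adjoin hx) hy

theorem BMTIndep.map_prod_ofFn_of_alternating (hindep : BMTIndep φ E A)
    (hdisj : ∀ j j', j ≠ j' → Disjoint (P j) (P j'))
    (hEdge : ∀ j j', j ≠ j' → ∀ i ∈ P j, ∀ i' ∈ P j', ¬ E i i') {n : ℕ} (idx : Fin (n + 1) → J)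
    (halt : ∀ k : Fin n, idx k.castSucc ≠ idx k.succ) (b : Fin (n + 1) → 𝒜)
    (hb : ∀ k, b k ∈ NonUnitalAlgebra.adjoin ℂ (⋃ i ∈ P (idx k), (A i : Set 𝒜))) :
    φ (List.ofFn b).prod = ∏ k, φ (b k) := by
  induction n with
  | zero => simp
  | succ n ih =>
    have hrest : (List.ofFn fun k : Fin (n + 1) => b k.succ).prod ∈ Submodule.span ℂ
        ((⋃ i ∈ P (idx (Fin.succ 0)), (A i : Set 𝒜)) *
          (Submonoid.closure (⋃ i, (A i : Set 𝒜)) : Set 𝒜)) := by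
      rw [List.ofFn_succ, List.prod_cons]
      refine mul_mem_span_mul_closure (Set.iUnion₂_subset_iUnion _ _)
        (NonUnitalAlgebra.mem_span_mul_closure_of_mem_adjoin (hb _))
        (Subalgebra.list_prod_mem _ fun x hx => ?_)
      obtain ⟨k, rfl⟩ := List.mem_ofFn.mp hx
      exact NonUnitalAlgebra.adjoin_le_algebra_adjoin ℂ _
        (NonUnitalAlgebra.adjoin_mono (Set.iUnion₂_subset_iUnion _ _) (hb _))
    rw [List.ofFn_succ, List.prod_cons, hindep.map_mul_eq_mul_map_of_ne hdisj hEdge (halt 0) (hb 0)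
      hrest, ih (fun k => idx k.succ) (fun k => halt k.succ) _ (fun k => hb k.succ)]
    exact (Fin.prod_univ_succ fun k => φ (b k)).symm

end Partition

/-- consistency, boolean case. If no edges between distinct groups are
present, the generated subalgebras are boolean independent. -/
theorem stmt9    {𝒜 : Type*} [Ring 𝒜] [Algebra ℂ 𝒜] (φ : 𝒜 →ₗ[ℂ] ℂ)
    {I J : Type*} (E : I → I → Prop)
    (A : I → NonUnitalSubalgebra ℂ 𝒜) (hindep : BMTIndep φ E A)
    (P : J → Set I)
    (hdisj : ∀ j j', j ≠ j' → Disjoint (P j) (P j'))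
    (B : J → NonUnitalSubalgebra ℂ 𝒜)
    (hB : ∀ j, B j = NonUnitalAlgebra.adjoin ℂ (⋃ i ∈ P j, (A i : Set 𝒜)))
    (hEdge : ∀ j j', j ≠ j' → ∀ i ∈ P j, ∀ i' ∈ P j', ¬ E i i') :
    ∀ (m : ℕ), 1 ≤ m → ∀ (idx : Fin m → J) (b : Fin m → 𝒜),
      (∀ k, b k ∈ B (idx k)) →
      (∀ (k : ℕ) (h : k + 1 < m), idx ⟨k, by omega⟩ ≠ idx ⟨k + 1, h⟩) →
      φ (List.ofFn b).prod = ∏ k : Fin m, φ (b k) := by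
  intro m hm idx b hb halt
  obtain ⟨n, rfl⟩ : ∃ n, m = n + 1 := ⟨m - 1, by omega⟩
  exact hindep.map_prod_ofFn_of_alternating hdisj hEdge idx (fun k => halt k (by omega)) b
    fun k => hB (idx k) ▸ hb k

end
end

section
/- Let a_1, …, a_N be random variables in a non-commutative probability space (𝒜, φ) that are BMT independent with respect to a digraph G = ([N], E) and satisfy φ(a_i) = 0 and φ(a_i²) = 1 for all i. Suppose i : [2m] → [N] is such that π = ker[i] is a pair partition of [2m]. Then φ(a_{i_1} a_{i_2} ⋯ a_{i_{2m}}) = 1 if every edge of G_{π(i)} is an edge of G, and φ(a_{i_1} a_{i_2} ⋯ a_{i_{2m}}) = 0 otherwise. -/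
open scoped Classical
open Filter

noncomputable section

lemma blockProd_singleton {A : Type*} [Monoid A] {m : ℕ} (a : Fin m → A) (x : Fin m) :
    blockProd a {x} = a x := by
  simp [blockProd, Finset.sort_singleton]

lemma blockProd_pair {A : Type*} [Monoid A] {m : ℕ} (a : Fin m → A) {x y : Fin m}
    (h : x < y) : blockProd a {x, y} = a x * a y := by
  have hs : ({x, y} : Finset (Fin m)).sort (· ≤ ·) = [x, y] := by
    rw [show ({x, y} : Finset (Fin m)) = insert x {y} from rfl,
      Finset.sort_insert]
    · simp [Finset.sort_singleton]
    · intro b hb; simp only [Finset.mem_singleton] at hb; subst hb; exact h.le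
    · simp [h.ne]
  simp [blockProd, hs]

/-- The fiber of `f` at `k`. -/
def fiberOf {m : ℕ} {V : Type*} (f : Fin m → V) (k : Fin m) : Finset (Fin m) :=
  Finset.univ.filter fun k' => f k = f k'

/-- The `G`-kernel block at `k`. -/
def gblockOf {m : ℕ} {V : Type*} (E : V → V → Prop) (f : Fin m → V) (k : Fin m) :
    Finset (Fin m) :=
  Finset.univ.filter fun k' => kerGRelOn E f Finset.univ k k'

lemma mem_fiberOf {m : ℕ} {V : Type*} (f : Fin m → V) (k x : Fin m) :
    x ∈ fiberOf f k ↔ f k = f x := by simp [fiberOf]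

lemma fiberOf_mem_kerBlocks {m : ℕ} {V : Type*} (f : Fin m → V) (k : Fin m) :
    fiberOf f k ∈ kerBlocks f :=
  Finset.mem_image_of_mem (fun k => Finset.univ.filter fun k' => f k = f k')
    (Finset.mem_univ k)

lemma self_mem_fiberOf {m : ℕ} {V : Type*} (f : Fin m → V) (k : Fin m) :
    k ∈ fiberOf f k := by simp [fiberOf]

lemma fiberOf_congr {m : ℕ} {V : Type*} (f : Fin m → V) {k k' : Fin m}
    (h : f k = f k') : fiberOf f k = fiberOf f k' := by
  ext x; simp [fiberOf, h]

lemma kerBlocks_eq_fiberOf {m : ℕ} {V : Type*} (f : Fin m → V) {B : Finset (Fin m)}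
    (hB : B ∈ kerBlocks f) : ∃ k, B = fiberOf f k := by
  obtain ⟨k, -, hk⟩ := Finset.mem_image.mp hB
  exact ⟨k, hk.symm⟩

lemma gblockOf_mem_kerGBlocks {m : ℕ} {V : Type*} (E : V → V → Prop) (f : Fin m → V)
    (k : Fin m) : gblockOf E f k ∈ kerGBlocks E f Finset.univ :=
  Finset.mem_image_of_mem (fun k => Finset.univ.filter fun k' => kerGRelOn E f Finset.univ k k')
    (Finset.mem_univ k)

/-- if `ker[i]` is a pair partition then the mixed moment is `1` when
`G_{π(i)}` is a subgraph of `G` and `0` otherwise. -/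
theorem stmt12 {𝒜 : Type*} [Ring 𝒜] [Algebra ℂ 𝒜] (φ : 𝒜 →ₗ[ℂ] ℂ) (hφ : φ 1 = 1)
    {N : ℕ} (E : Fin N → Fin N → Prop) (hE : ∀ v, ¬ E v v)
    (a : Fin N → 𝒜) (hindep : BMTIndepVars φ E a)
    (hmean : ∀ i, φ (a i) = 0) (hvar : ∀ i, φ (a i * a i) = 1)
    (m : ℕ) (idx : Fin (2 * m) → Fin N)
    (hpair : ∀ B ∈ kerBlocks idx, B.card = 2) :
    ((∀ p ∈ nestCrossEdges (kerBlocks idx) idx, E p.1 p.2) →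
        φ (List.ofFn fun k => a (idx k)).prod = 1) ∧
    ((¬ ∀ p ∈ nestCrossEdges (kerBlocks idx) idx, E p.1 p.2) →
        φ (List.ofFn fun k => a (idx k)).prod = 0) := by
  have key := hindep (2 * m) idx
  constructor
  · -- subgraph case: moment = 1
    intro hG
    have hGf : ∀ k, gblockOf E idx k = fiberOf idx k := by
      intro k
      ext x
      simp only [gblockOf, fiberOf, Finset.mem_filter, Finset.mem_univ, true_and]
      constructor
      · exact fun h => h.1
      · intro h
        refine ⟨h, fun l _ h1 h2 hne => ?_⟩
        refine hG (idx l, idx k) ?_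
        refine ⟨fiberOf idx l, fiberOf_mem_kerBlocks idx l, fiberOf idx k,
          fiberOf_mem_kerBlocks idx k, ?_, ?_,
          ⟨l, self_mem_fiberOf idx l, rfl⟩, ⟨k, self_mem_fiberOf idx k, rfl⟩⟩
        · intro hEq
          have : k ∈ fiberOf idx l := hEq ▸ self_mem_fiberOf idx k
          exact hne ((mem_fiberOf idx l k).mp this)
        · refine ⟨l, self_mem_fiberOf idx l, min k x, ?_, max k x, ?_, h1, h2⟩
          · rcases min_cases k x with ⟨he, -⟩ | ⟨he, -⟩ <;> rw [mem_fiberOf, he]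
            exact h
          · rcases max_cases k x with ⟨he, -⟩ | ⟨he, -⟩ <;> rw [mem_fiberOf, he]
            exact h
    have hEqB : kerGBlocks E idx Finset.univ = kerBlocks idx := by
      unfold kerGBlocks kerBlocks
      apply Finset.image_congr
      intro k _
      exact hGf k
    rw [key, hEqB]
    apply Finset.prod_eq_one
    intro B hB
    obtain ⟨k₀, rfl⟩ := kerBlocks_eq_fiberOf idx hB
    obtain ⟨x, y, hxy, hBxy⟩ := Finset.card_eq_two.mp (hpair _ hB)
    have hx : x ∈ fiberOf idx k₀ := by rw [hBxy]; simp
    have hy : y ∈ fiberOf idx k₀ := by rw [hBxy]; simp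
    have hixy : idx x = idx y :=
      ((mem_fiberOf idx k₀ x).mp hx).symm.trans ((mem_fiberOf idx k₀ y).mp hy)
    rcases lt_or_gt_of_ne hxy with h | h
    · rw [hBxy, blockProd_pair _ h, hixy]
      exact hvar _
    · rw [hBxy, show ({x, y} : Finset (Fin (2 * m))) = {y, x} by ext z; simp [or_comm],
        blockProd_pair _ h, ← hixy]
      exact hvar _
  · -- non-subgraph case: moment = 0
    intro hG
    push_neg at hG
    obtain ⟨p, hp, hnE⟩ := hG
    obtain ⟨B, hB, C, hC, hBC, ⟨l, hlB, c₁, hc₁, c₂, hc₂, hl1, hl2⟩,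
      ⟨k, hkB, hk1⟩, ⟨k', hk'C, hk'2⟩⟩ := hp
    obtain ⟨b₀, rfl⟩ := kerBlocks_eq_fiberOf idx hB
    obtain ⟨c₀, rfl⟩ := kerBlocks_eq_fiberOf idx hC
    have hil : idx l = p.1 := by
      rw [← hk1]
      exact ((mem_fiberOf idx b₀ l).mp hlB).symm.trans ((mem_fiberOf idx b₀ k).mp hkB)
    have hic₁ : idx c₁ = p.2 := by
      rw [← hk'2]
      exact ((mem_fiberOf idx c₀ c₁).mp hc₁).symm.trans ((mem_fiberOf idx c₀ k').mp hk'C)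
    have hlc : idx l ≠ idx c₁ := by
      intro hEq
      apply hBC
      exact fiberOf_congr idx
        (((mem_fiberOf idx b₀ l).mp hlB).trans
          (hEq.trans ((mem_fiberOf idx c₀ c₁).mp hc₁).symm))
    have hc12 : c₁ < c₂ := hl1.trans hl2
    have hCpair : fiberOf idx c₀ = {c₁, c₂} := by
      refine (Finset.eq_of_subset_of_card_le ?_ ?_).symm
      · intro z hz
        simp only [Finset.mem_insert, Finset.mem_singleton] at hz
        rcases hz with rfl | rfl
        exacts [hc₁, hc₂]
      · rw [hpair _ (fiberOf_mem_kerBlocks idx c₀), Finset.card_pair hc12.ne]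
    have hsing : gblockOf E idx c₁ = {c₁} := by
      ext x
      simp only [gblockOf, Finset.mem_filter, Finset.mem_univ, true_and,
        Finset.mem_singleton]
      constructor
      · rintro ⟨h1, h2⟩
        have hxC : x ∈ fiberOf idx c₀ := by
          rw [mem_fiberOf]
          exact ((mem_fiberOf idx c₀ c₁).mp hc₁).trans h1
        rw [hCpair] at hxC
        simp only [Finset.mem_insert, Finset.mem_singleton] at hxC
        rcases hxC with rfl | rfl
        · rfl
        · exfalso
          have := h2 l (Finset.mem_univ l) (by rw [min_eq_left hc12.le]; exact hl1)
            (by rw [max_eq_right hc12.le]; exact hl2) hlc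
          rw [hil, hic₁] at this
          exact hnE this
      · rintro rfl
        refine ⟨rfl, fun z _ h1 h2 _ => absurd (h1.trans h2) ?_⟩
        simp
    rw [key]
    apply Finset.prod_eq_zero (gblockOf_mem_kerGBlocks E idx c₁)
    rw [hsing, blockProd_singleton]
    exact hmean _

end
end
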